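/- arXiv:1804.10087 — 2 statements merged into one kernel-verified Lean document; each statement's English description precedes it below -/
import Mathlib

section
/- Let χ : ℝ → ℝ be a smooth function, compactly supported in [0,1], with |χ'| and |χ''| bounded by a constant K. For a positive real a, a real ε ≥ 1, and a positive integer m, the function u(z) = χ(ε²|z|²)·Re(a·zᵐ) satisfies |Δu(z)| ≤ C·m·a·ε²/εᵐ for all z with 1/(2ε) < |z| < 1/ε, where C is a constant depending only on K (not on m, a, ε). -/
open Complex ContinuousLinearMap

noncomputable def dq (ε : ℝ) (w : ℂ) : ℂ →L[ℝ] ℝ :=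
  (2*ε^2*w.re) • Complex.reCLM + (2*ε^2*w.im) • Complex.imCLM

@[simp] lemma dq_apply (ε : ℝ) (w v : ℂ) : dq ε w v = 2*ε^2*w.re*v.re + 2*ε^2*w.im*v.im := by
  simp [dq]

noncomputable def dm (c : ℂ) (k : ℕ) (w : ℂ) : ℂ →L[ℝ] ℝ :=
  Complex.reCLM.comp ((ContinuousLinearMap.smulRight (1 : ℂ →L[ℂ] ℂ) (c * k * w^(k-1))).restrictScalars ℝ)

@[simp] lemma dm_apply (c : ℂ) (k : ℕ) (w v : ℂ) : dm c k w v = (v * (c * k * w^(k-1))).re := by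
  simp [dm]

lemma hasFDerivAt_monre (c : ℂ) (k : ℕ) (w : ℂ) :
    HasFDerivAt (fun w : ℂ => (c * w^k).re) (dm c k w) w := by
  have h1 : HasDerivAt (fun w : ℂ => c * w^k) (c * k * w^(k-1)) w := by
    simpa [mul_assoc] using (hasDerivAt_pow k w).const_mul c
  exact Complex.reCLM.hasFDerivAt.comp w ((h1.hasFDerivAt).restrictScalars ℝ)

lemma hasFDerivAt_q (ε : ℝ) (w : ℂ) :
    HasFDerivAt (fun w : ℂ => ε^2 * ‖w‖ ^ 2) (dq ε w) w := by
  have : (fun w : ℂ => ε^2 * ‖w‖ ^ 2) = fun w : ℂ => ε^2 * (w.re*w.re + w.im*w.im) := by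
    funext w; rw [Complex.sq_norm, Complex.normSq_apply]
  rw [this]
  have hre : HasFDerivAt (fun w : ℂ => w.re) (Complex.reCLM : ℂ →L[ℝ] ℝ) w := Complex.reCLM.hasFDerivAt
  have him : HasFDerivAt (fun w : ℂ => w.im) (Complex.imCLM : ℂ →L[ℝ] ℝ) w := Complex.imCLM.hasFDerivAt
  have := (((hre.mul hre).add (him.mul him)).const_mul (ε^2))
  refine HasFDerivAt.congr_fderiv (this.congr_of_eventuallyEq (Filter.Eventually.of_forall fun y => rfl)) ?_
  ext v
  simp [dq]
  ring

lemma hasFDerivAt_u (χ : ℝ → ℝ) (hχ : Differentiable ℝ χ) (ε a : ℝ) (m : ℕ) (w : ℂ) :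
    HasFDerivAt (fun w : ℂ => χ (ε^2 * ‖w‖ ^ 2) * ((a:ℂ) * w^m).re)
      (χ (ε^2 * ‖w‖ ^ 2) • dm (a:ℂ) m w +
        ((a:ℂ) * w^m).re • (deriv χ (ε^2 * ‖w‖ ^ 2) • dq ε w)) w :=
  (((hχ _).hasDerivAt).comp_hasFDerivAt w (hasFDerivAt_q ε w)).mul (hasFDerivAt_monre (a:ℂ) m w)

/-- The Laplacian of `u : ℂ → ℝ`, viewing `ℂ ≅ ℝ²`. -/
noncomputable def laplacian (u : ℂ → ℝ) (z : ℂ) : ℝ :=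
  fderiv ℝ (fun w => fderiv ℝ u w 1) z 1 +
    fderiv ℝ (fun w => fderiv ℝ u w Complex.I) z Complex.I

set_option maxHeartbeats 1000000 in
/-- on the annulus `1/(2ε) < |z| < 1/ε` the Laplacian of
`u(z) = χ(ε²|z|²)·Re(a zᵐ)` is bounded by `C·m·a·ε²/εᵐ`, with `C` depending only on
the bound `K` for `|χ'|, |χ''|` (not on `m`, `a`, `ε`). -/
theorem stmt_2 (K : ℝ) :
    ∃ C : ℝ, 0 < C ∧
      ∀ (χ : ℝ → ℝ), ContDiff ℝ (⊤ : ℕ∞) χ → Function.support χ ⊆ Set.Icc 0 1 →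
        (∀ t : ℝ, |deriv χ t| ≤ K) → (∀ t : ℝ, |deriv (deriv χ) t| ≤ K) →
      ∀ (a ε : ℝ), 0 < a → 1 ≤ ε → ∀ (m : ℕ), 0 < m →
      ∀ (u : ℂ → ℝ), (∀ z : ℂ, u z = χ (ε^2 * ‖z‖ ^ 2) * ((a : ℂ) * z ^ m).re) →
      ∀ z : ℂ, 1 / (2 * ε) < ‖z‖ → ‖z‖ < 1 / ε →
        |laplacian u z| ≤ C * m * a * ε^2 / ε^m := by
  refine ⟨12*|K|+12, by positivity, ?_⟩
  intro χ hχ hsupp hχ' hχ'' a ε ha hε m hm u hu z hz1 hz2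
  have hχd : Differentiable ℝ χ := hχ.differentiable (by simp)
  have hχi : ContDiff ℝ ((⊤:ℕ∞) : WithTop ℕ∞) χ := hχ.of_le (by simp)
  have hχ'd : Differentiable ℝ (deriv χ) := ((contDiff_infty_iff_deriv.mp hχi).2).differentiable
    (by simp)
  have hK : 0 ≤ K := le_trans (abs_nonneg _) (hχ' 0)
  have hε0 : (0:ℝ) < ε := lt_of_lt_of_le one_pos hε
  have hu' : u = fun w : ℂ => χ (ε^2 * ‖w‖ ^ 2) * ((a:ℂ) * w^m).re := funext hu
  -- first derivatives
  have hfd1 : (fun w => fderiv ℝ u w 1) = (fun w : ℂ => χ (ε^2*‖w‖^2) * (((a:ℂ)*(m:ℂ)) * w^(m-1)).re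
      + ((a:ℂ)*w^m).re * (deriv χ (ε^2*‖w‖^2) * (2*ε^2*w.re))) := by
    funext w
    rw [hu', (hasFDerivAt_u χ hχd ε a m w).fderiv]
    simp
  have hfdI : (fun w => fderiv ℝ u w Complex.I) = (fun w : ℂ => χ (ε^2*‖w‖^2) * ((Complex.I * ((a:ℂ)*(m:ℂ))) * w^(m-1)).re
      + ((a:ℂ)*w^m).re * (deriv χ (ε^2*‖w‖^2) * (2*ε^2*w.im))) := by
    funext w
    rw [hu', (hasFDerivAt_u χ hχd ε a m w).fderiv]
    simp [mul_assoc]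
  -- second derivatives
  have hA := ((hχd _).hasDerivAt).comp_hasFDerivAt z (hasFDerivAt_q ε z)
  have hB := hasFDerivAt_monre ((a:ℂ)*(m:ℂ)) (m-1) z
  have hBI := hasFDerivAt_monre (Complex.I * ((a:ℂ)*(m:ℂ))) (m-1) z
  have hD := hasFDerivAt_monre (a:ℂ) m z
  have hE := ((hχ'd _).hasDerivAt).comp_hasFDerivAt z (hasFDerivAt_q ε z)
  have hG : HasFDerivAt (fun w : ℂ => 2*ε^2*w.re) ((2*ε^2 : ℝ) • (Complex.reCLM : ℂ →L[ℝ] ℝ)) z :=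
    Complex.reCLM.hasFDerivAt.const_mul (2*ε^2)
  have hGI : HasFDerivAt (fun w : ℂ => 2*ε^2*w.im) ((2*ε^2 : ℝ) • (Complex.imCLM : ℂ →L[ℝ] ℝ)) z :=
    Complex.imCLM.hasFDerivAt.const_mul (2*ε^2)
  have h21 := (hA.mul hB).add (hD.mul (hE.mul hG))
  have h2I := (hA.mul hBI).add (hD.mul (hE.mul hGI))
  simp only [Function.comp_def, Pi.mul_def, Pi.add_def] at h21 h2I
  have hlap : laplacian u z = (4*ε^4*‖z‖^2 * deriv (deriv χ) (ε^2*‖z‖^2)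
      + (4*ε^2 + 4*ε^2*m) * deriv χ (ε^2*‖z‖^2)) * (a * (z^m).re) := by
    rw [laplacian, hfd1, hfdI, h21.fderiv, h2I.fderiv]
    obtain ⟨k, rfl⟩ : ∃ k, m = k + 1 := ⟨m - 1, (Nat.succ_pred_eq_of_pos hm).symm⟩
    rw [show (‖z‖ ^ 2 : ℝ) = z.re^2 + z.im^2 by
      rw [Complex.sq_norm, Complex.normSq_apply]; ring]
    simp [pow_succ, Complex.mul_re, Complex.mul_im]
    push_cast
    ring
  -- bounds
  clear h21 h2I hA hB hBI hD hE hG hGI hfd1 hfdI hu' hu hχi hχd hχ'd hχ hsupp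
  set R := ‖z‖ with hR
  clear_value R
  have hr0 : 0 ≤ R := by rw [hR]; exact norm_nonneg z
  have hr : R ≤ 1/ε := le_of_lt hz2
  have hrε : R * ε ≤ 1 := by
    have := (lt_div_iff₀ hε0).mp hz2
    linarith
  have hε4 : ε^4 * R^2 ≤ ε^2 := by
    have h1 : (R*ε)^2 ≤ 1 := by nlinarith [mul_nonneg hr0 hε0.le]
    linarith [mul_le_mul_of_nonneg_right h1 (sq_nonneg ε)]
  have hrm : R ^ m ≤ (1/ε) ^ m := pow_le_pow_left₀ hr0 hr m
  have hrezm : |(z^m).re| ≤ R ^ m := by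
    calc |(z^m).re| ≤ ‖z^m‖ := Complex.abs_re_le_norm _
    _ = R ^ m := by rw [norm_pow, hR]
  have hm1 : (1:ℝ) ≤ (m:ℝ) := by exact_mod_cast hm
  have habs1 : |4*ε^4*R^2 * deriv (deriv χ) (ε^2*R^2)| ≤ 4*ε^4*R^2*K := by
    rw [abs_mul, _root_.abs_of_nonneg (by positivity : (0:ℝ) ≤ 4*ε^4*R^2)]
    exact mul_le_mul_of_nonneg_left (hχ'' _) (by positivity)
  have habs2 : |(4*ε^2 + 4*ε^2*(m:ℝ)) * deriv χ (ε^2*R^2)| ≤ (4*ε^2 + 4*ε^2*(m:ℝ))*K := by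
    rw [abs_mul, _root_.abs_of_nonneg (by positivity : (0:ℝ) ≤ 4*ε^2 + 4*ε^2*(m:ℝ))]
    exact mul_le_mul_of_nonneg_left (hχ' _) (by positivity)
  have hre : |a * (z^m).re| ≤ a * R^m := by
    rw [abs_mul, _root_.abs_of_pos ha]
    exact mul_le_mul_of_nonneg_left hrezm ha.le
  have hstep1 : |laplacian u z| ≤ (4*ε^4*R^2*K + (4*ε^2 + 4*ε^2*m)*K) * (a * R^m) := by
    rw [hlap, abs_mul]
    exact mul_le_mul ((abs_add_le _ _).trans (add_le_add habs1 habs2)) hre (abs_nonneg _)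
      (by positivity)
  have hstep2 : (4*ε^4*R^2*K + (4*ε^2 + 4*ε^2*m)*K) * (a * R^m)
      ≤ ((12*|K|+12)*m*ε^2) * (a * (1/ε)^m) := by
    have c1 : 4*ε^4*R^2*K ≤ 4*ε^2*K := by
      linarith [mul_le_mul_of_nonneg_right hε4 hK]
    have c2 : 4*ε^2*K + (4*ε^2+4*ε^2*(m:ℝ))*K ≤ 12*(m:ℝ)*ε^2*K := by
      nlinarith [mul_nonneg (mul_nonneg (by positivity : (0:ℝ) ≤ ε^2) hK)
        (sub_nonneg.mpr hm1)]
    have c3 : 12*(m:ℝ)*ε^2*K ≤ (12*|K|+12)*(m:ℝ)*ε^2 := by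
      nlinarith [mul_le_mul_of_nonneg_left (le_abs_self K)
        (by positivity : (0:ℝ) ≤ 12*(m:ℝ)*ε^2),
        mul_nonneg (mul_nonneg (by norm_num : (0:ℝ) ≤ 12) (le_trans zero_le_one hm1))
          (sq_nonneg ε)]
    apply mul_le_mul (le_trans (by linarith) c3)
      (mul_le_mul_of_nonneg_left hrm ha.le) (by positivity) (by positivity)
  have hfin : ((12*|K|+12)*m*ε^2) * (a * (1/ε)^m) = (12*|K|+12) * m * a * ε^2 / ε^m := by
    rw [div_pow, one_pow, one_div, div_eq_mul_inv]
    ring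
  calc |laplacian u z| ≤ _ := hstep1
    _ ≤ _ := hstep2
    _ = _ := hfin
end

section
/- Let (a_m) be a sequence of positive reals with a_k > k^{3k}·Σ_{m=1}^{k−1} a_m for all sufficiently large k. Then there is no nonzero holomorphic function h on the unit disc with h(0) = 0, all Taylor coefficients of absolute value at most 1, and such that the formal power series Σ_{m ≥ 1} a_m·h(t)^m is identically zero (all its coefficients vanish). -/
/-!
Let `M ≥ 1` be the order of `h` at `0` and `c = |α_M| > 0`. In the coefficient of `t^{kM}` of
`Σ a_m h^m` only `m ≤ k` contribute, and the term `m = k` is exactly `a_k α_M^k`. Bounding the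
other coefficients of `h^m` by `(kM + 1)^m ≤ k^{2k}` gives `a_k c^k ≤ k^{2k} Σ_{m<k} a_m`, and
once `c k ≥ 1` this contradicts the growth hypothesis.
-/

open Finset

/-- The coefficient of `t^K` in `h(t)^m`, where `h(t) = Σ_n α_n tⁿ`. -/
noncomputable def powCoeff (α : ℕ → ℂ) (m K : ℕ) : ℂ :=
  ∑ ν ∈ (Fintype.piFinset fun _ : Fin m => Finset.range (K + 1)) |>.filter
      (fun ν => ∑ i, ν i = K),
    ∏ i, α (ν i)

open Filter

lemma natCast_mul_add_one_pow_le {k M m : ℕ} (hM : M < k) (hm : m ≤ k) :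
    (((k * M : ℕ) : ℝ) + 1) ^ m ≤ (k : ℝ) ^ (2 * k) := by
  have hbase : k * M + 1 ≤ k ^ 2 := by
    obtain ⟨n, rfl⟩ := Nat.exists_eq_add_of_lt hM
    nlinarith
  have : (k * M + 1) ^ m ≤ k ^ (2 * k) := calc
    (k * M + 1) ^ m ≤ (k ^ 2) ^ m := Nat.pow_le_pow_left hbase m
    _ ≤ (k ^ 2) ^ k := Nat.pow_le_pow_right (pow_pos (by omega) 2) hm
    _ = k ^ (2 * k) := by rw [← pow_mul]
  exact_mod_cast this

section powCoeff

variable {α : ℕ → ℂ} {M : ℕ}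

lemma powCoeff_eq_zero_of_lt_mul (hα : ∀ j < M, α j = 0) {m K : ℕ} (hK : K < M * m) :
    powCoeff α m K = 0 := by
  refine sum_eq_zero fun ν hν => ?_
  rw [mem_filter] at hν
  by_contra hne
  have hge : ∀ i, M ≤ ν i := fun i => by
    by_contra hlt
    exact hne (prod_eq_zero (mem_univ i) (hα _ (not_le.mp hlt)))
  have : M * m ≤ K := calc
    M * m = ∑ _i : Fin m, M := by simp [mul_comm]
    _ ≤ ∑ i, ν i := sum_le_sum fun i _ => hge i
    _ = K := hν.2
  omega

/-- Only the constant tuple `(M, …, M)` survives in the coefficient of `t^{kM}` in `h^k`. -/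
lemma powCoeff_mul_eq_pow (hα : ∀ j < M, α j = 0) (k : ℕ) :
    powCoeff α k (k * M) = α M ^ k := by
  have hmem : (fun _ : Fin k => M) ∈ (Fintype.piFinset fun _ : Fin k => range (k * M + 1)).filter
      (fun ν => ∑ i, ν i = k * M) := by
    refine mem_filter.mpr ⟨Fintype.mem_piFinset.mpr fun i => mem_range.mpr ?_, by simp⟩
    have : M ≤ k * M := Nat.le_mul_of_pos_left M (Fin.pos i)
    omega
  rw [powCoeff, sum_eq_single_of_mem _ hmem]
  · simp
  intro ν hν hne
  rw [mem_filter] at hν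
  by_cases hge : ∀ i, M ≤ ν i
  · refine absurd (funext fun i => ?_) hne
    have hsum : ∑ _i : Fin k, M = ∑ i, ν i := by simp [hν.2]
    exact ((sum_eq_sum_iff_of_le fun i _ => hge i).mp hsum i (mem_univ i)).symm
  · obtain ⟨i, hi⟩ := not_forall.mp hge
    exact prod_eq_zero (mem_univ i) (hα _ (not_le.mp hi))

lemma norm_powCoeff_le (hα : ∀ n, ‖α n‖ ≤ 1) (m K : ℕ) :
    ‖powCoeff α m K‖ ≤ ((K : ℝ) + 1) ^ m := by
  set S := (Fintype.piFinset fun _ : Fin m => range (K + 1)).filter (fun ν => ∑ i, ν i = K)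
  calc ‖∑ ν ∈ S, ∏ i, α (ν i)‖
      ≤ ∑ ν ∈ S, ‖∏ i, α (ν i)‖ := norm_sum_le _ _
    _ ≤ ∑ _ν ∈ S, (1 : ℝ) := sum_le_sum fun ν _ => by
        rw [norm_prod]
        exact prod_le_one (fun i _ => norm_nonneg _) fun i _ => hα _
    _ = #S := by simp
    _ ≤ #(Fintype.piFinset fun _ : Fin m => range (K + 1)) := by
        exact_mod_cast card_filter_le _ _
    _ = ((K : ℝ) + 1) ^ m := by simp

lemma norm_sum_mul_powCoeff_le (hα : ∀ n, ‖α n‖ ≤ 1) {a : ℕ → ℝ} {s : Finset ℕ} {K : ℕ}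
    {B : ℝ} (ha : ∀ m ∈ s, 0 ≤ a m) (hB : ∀ m ∈ s, ((K : ℝ) + 1) ^ m ≤ B) :
    ‖∑ m ∈ s, (a m : ℂ) * powCoeff α m K‖ ≤ B * ∑ m ∈ s, a m := by
  rw [mul_sum]
  refine (norm_sum_le _ _).trans (sum_le_sum fun m hm => ?_)
  rw [norm_mul, Complex.norm_real, Real.norm_of_nonneg (ha m hm), mul_comm]
  exact mul_le_mul_of_nonneg_right ((norm_powCoeff_le hα m K).trans (hB m hm)) (ha m hm)

lemma sum_Icc_mul_powCoeff_mul (a : ℕ → ℂ) (hα : ∀ j < M, α j = 0) (hM : 1 ≤ M) {k : ℕ}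
    (hk : 1 ≤ k) :
    ∑ m ∈ Icc 1 (k * M), a m * powCoeff α m (k * M) =
      ∑ m ∈ Icc 1 (k - 1), a m * powCoeff α m (k * M) + a k * α M ^ k := by
  have hsub : Icc 1 k ⊆ Icc 1 (k * M) := Icc_subset_Icc_right (Nat.le_mul_of_pos_right k hM)
  rw [← sum_subset hsub fun m hm hmk => ?_]
  · obtain ⟨n, rfl⟩ := Nat.exists_eq_add_of_le' hk
    rw [sum_Icc_succ_top (by omega), Nat.add_sub_cancel, powCoeff_mul_eq_pow hα]
  · have hkm : k < m := by simp only [mem_Icc, not_and, not_le] at hm hmk; exact hmk hm.1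
    rw [powCoeff_eq_zero_of_lt_mul hα (by nlinarith), mul_zero]

lemma mul_norm_pow_le_of_sum_mul_powCoeff_eq_zero {a : ℕ → ℝ} (ha : ∀ m, 1 ≤ m → 0 ≤ a m)
    (hα : ∀ n, ‖α n‖ ≤ 1) (hαM : ∀ j < M, α j = 0) (hM : 1 ≤ M) {k : ℕ} (hk : M < k)
    (hvan : ∑ m ∈ Icc 1 (k * M), (a m : ℂ) * powCoeff α m (k * M) = 0) :
    a k * ‖α M‖ ^ k ≤ (k : ℝ) ^ (2 * k) * ∑ m ∈ Icc 1 (k - 1), a m := by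
  rw [sum_Icc_mul_powCoeff_mul _ hαM hM (by omega), add_eq_zero_iff_eq_neg'] at hvan
  have hnorm : ‖(a k : ℂ) * α M ^ k‖ = a k * ‖α M‖ ^ k := by
    rw [norm_mul, norm_pow, Complex.norm_real, Real.norm_of_nonneg (ha k (by omega))]
  rw [← hnorm, hvan, norm_neg]
  exact norm_sum_mul_powCoeff_le hα (fun m hm => ha m (mem_Icc.mp hm).1)
    fun m hm => natCast_mul_add_one_pow_le hk (by simp only [mem_Icc] at hm; omega)

end powCoeff

lemma exists_order_of_hasSum {h : ℂ → ℂ} {α : ℕ → ℂ}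
    (hsum : ∀ t : ℂ, ‖t‖ < 1 → HasSum (fun n : ℕ => α n * t ^ n) (h t)) (h0 : h 0 = 0)
    (hne : ∃ t : ℂ, ‖t‖ < 1 ∧ h t ≠ 0) :
    ∃ M, 1 ≤ M ∧ α M ≠ 0 ∧ ∀ j < M, α j = 0 := by
  have hα0 : α 0 = 0 := by
    have hs0 : HasSum (fun n : ℕ => α n * 0 ^ n) (α 0) := by
      simpa using hasSum_single (f := fun n : ℕ => α n * (0 : ℂ) ^ n) 0
        fun n hn => by simp [zero_pow hn]
    rw [← h0]
    exact hs0.unique (hsum 0 (by simp))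
  have hex : ∃ n, α n ≠ 0 := by
    obtain ⟨t, ht, hht⟩ := hne
    by_contra! hzero
    simp only [hzero, zero_mul] at hsum
    exact hht (hasSum_zero.unique (hsum t ht)).symm
  refine ⟨Nat.find hex, Nat.one_le_iff_ne_zero.mpr fun h0 => ?_, Nat.find_spec hex,
    fun j hj => not_not.mp (Nat.find_min hex hj)⟩
  exact Nat.find_spec hex (h0 ▸ hα0)

/-- if `a_k > k^{3k}·Σ_{m=1}^{k-1} a_m` for all large `k`, then there is no
nonzero holomorphic `h` on the unit disc with `h(0) = 0`, Taylor coefficients of modulus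
`≤ 1`, such that the formal power series `Σ_{m ≥ 1} a_m h(t)^m` vanishes identically. -/
theorem stmt_12 (a : ℕ → ℝ) (ha : ∀ m : ℕ, 1 ≤ m → 0 < a m)
    (hgrow : ∃ K₀ : ℕ, ∀ k : ℕ, K₀ ≤ k →
      a k > (k : ℝ) ^ (3 * k) * ∑ m ∈ Icc 1 (k - 1), a m) :
    ¬ ∃ (h : ℂ → ℂ) (α : ℕ → ℂ),
        (∀ t : ℂ, ‖t‖ < 1 → HasSum (fun n : ℕ => α n * t ^ n) (h t)) ∧
        h 0 = 0 ∧ (∃ t : ℂ, ‖t‖ < 1 ∧ h t ≠ 0) ∧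
        (∀ n : ℕ, ‖α n‖ ≤ 1) ∧
        (∀ k : ℕ, 1 ≤ k → ∑ m ∈ Icc 1 k, (a m : ℂ) * powCoeff α m k = 0) := by
  rintro ⟨h, α, hsum, h0, hne, habs, hvan⟩
  obtain ⟨K₀, hgrow⟩ := hgrow
  obtain ⟨M, hM, hαM, hlt⟩ := exists_order_of_hasSum hsum h0 hne
  set c := ‖α M‖
  have hc : 0 < c := norm_pos_iff.mpr hαM
  obtain ⟨k, hK₀, hMk, hck⟩ := ((eventually_ge_atTop K₀).and ((eventually_gt_atTop M).and
    ((tendsto_natCast_atTop_atTop.const_mul_atTop hc).eventually_ge_atTop 1))).exists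
  have hkey := mul_norm_pow_le_of_sum_mul_powCoeff_eq_zero (fun m hm => (ha m hm).le) habs hlt
    hM hMk (hvan (k * M) (Nat.mul_pos (by omega) hM))
  refine (hgrow k hK₀).not_ge ?_
  calc a k ≤ a k * (c * k) ^ k := le_mul_of_one_le_right (ha k (by omega)).le (one_le_pow₀ hck)
    _ = a k * c ^ k * (k : ℝ) ^ k := by ring
    _ ≤ (k : ℝ) ^ (2 * k) * (∑ m ∈ Icc 1 (k - 1), a m) * (k : ℝ) ^ k := by gcongr
    _ = (k : ℝ) ^ (3 * k) * ∑ m ∈ Icc 1 (k - 1), a m := by ring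
end
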